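/- Let a ∈ ℝ and δ > 0, and let f : ℝ → ℂ be differentiable at every point of [a, a+δ] with derivative f' interval-integrable on [a, a+δ]. Then the right-hand local Fourier series of f at a converges with symmetric partial sums, and f(a)/2 = (1/(2δ)) lim_{M→∞} ∑_{n=-M}^{M} e^{iπna/δ} ∫_{a}^{a+δ} f(u) e^{-iπnu/δ} du. -/

import Mathlib

/-!
With `θ(u) = π (u - a) / δ`, the symmetric partial sum equals `∫_a^{a+δ} f(u) D_M(θ(u)) du`
for the Dirichlet kernel `D_M`, whose integral over this half period is `δ`. Differentiability
of `f` at `a` gives `f(u) = f(a) + ψ(u) sin(θ(u)/2)` with `ψ` continuous on `[a, a+δ]`, and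
`D_M(θ) sin(θ/2) = sin((M + 1/2) θ)`, so the partial sum is `δ f(a)` plus
`∫ ψ(u) sin((M + 1/2) θ(u)) du`, which tends to zero by the Riemann–Lebesgue lemma.
-/

open MeasureTheory intervalIntegral
open Real Filter Finset Topology
open scoped Interval
open Complex (I)

theorem Finset.sum_Icc_neg_eq_add_sum_range {M : Type*} [AddCommMonoid M] (g : ℤ → M)
    (N : ℕ) :
    ∑ n ∈ Icc (-(N : ℤ)) N, g n = g 0 + ∑ k ∈ range N, (g (k + 1) + g (-(k + 1))) := by
  induction N with
  | zero => simp
  | succ N ih =>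
    have hIcc : Icc (-((N + 1 : ℕ) : ℤ)) (N + 1 : ℕ)
        = {(N : ℤ) + 1, -((N : ℤ) + 1)} ∪ Icc (-(N : ℤ)) N := by
      ext n; simp only [mem_union, mem_insert, mem_singleton, mem_Icc]; omega
    rw [hIcc, sum_union (by simp only [disjoint_left, mem_insert, mem_singleton, mem_Icc]; omega),
      sum_pair (by omega), ih, sum_range_succ]
    abel

noncomputable def dirichletKernel (M : ℕ) (x : ℝ) : ℝ :=
  1 + 2 * ∑ k ∈ range M, cos ((k + 1) * x)

@[fun_prop]
theorem continuous_dirichletKernel (M : ℕ) : Continuous (dirichletKernel M) := by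
  unfold dirichletKernel
  fun_prop

theorem dirichletKernel_neg (M : ℕ) (x : ℝ) : dirichletKernel M (-x) = dirichletKernel M x := by
  simp only [dirichletKernel, mul_neg, cos_neg]

theorem ofReal_dirichletKernel (M : ℕ) (x : ℝ) :
    (dirichletKernel M x : ℂ) = ∑ n ∈ Icc (-(M : ℤ)) M, Complex.exp (n * x * I) := by
  rw [sum_Icc_neg_eq_add_sum_range, dirichletKernel, Int.cast_zero, zero_mul, zero_mul,
    Complex.exp_zero]
  push_cast
  rw [mul_sum]
  congr 1
  refine sum_congr rfl fun k _ => ?_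
  rw [Complex.two_cos]
  congr 2
  ring

theorem dirichletKernel_mul_sin (M : ℕ) (x : ℝ) :
    dirichletKernel M x * sin (x / 2) = sin ((M + 1 / 2) * x) := by
  induction M with
  | zero => simp [dirichletKernel]; ring_nf
  | succ M ih =>
    have hcos : dirichletKernel (M + 1) x = dirichletKernel M x + 2 * cos ((M + 1) * x) := by
      simp only [dirichletKernel, sum_range_succ]; ring
    have h₁ : ((M + 1 : ℕ) + 1 / 2) * x = (M + 1) * x + x / 2 := by push_cast; ring
    have h₂ : (M + 1 / 2) * x = (M + 1) * x - x / 2 := by ring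
    rw [hcos, add_mul, ih, h₁, h₂, sin_add, sin_sub]
    ring

theorem integral_cos_nat_mul (k : ℕ) (hk : k ≠ 0) : ∫ x in (0)..π, cos (k * x) = 0 := by
  rw [intervalIntegral.integral_comp_mul_left cos (by exact_mod_cast hk), integral_cos]
  simp [sin_nat_mul_pi]

theorem integral_dirichletKernel (M : ℕ) : ∫ x in (0)..π, dirichletKernel M x = π := by
  have hcos : ∀ k : ℕ, ∫ x in (0)..π, cos ((k + 1) * x) = 0 := fun k => by
    exact_mod_cast integral_cos_nat_mul (k + 1) k.succ_ne_zero
  simp only [dirichletKernel]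
  rw [integral_add intervalIntegrable_const ((by fun_prop : Continuous _).intervalIntegrable _ _),
    intervalIntegral.integral_const_mul, intervalIntegral.integral_finsetSum]
  · simp [hcos]
  · intro k _
    exact (by fun_prop : Continuous fun x => cos ((k + 1 : ℝ) * x)).intervalIntegrable _ _

theorem integral_dirichletKernel_comp (M : ℕ) (a δ : ℝ) :
    ∫ u in a..(a + δ), dirichletKernel M (π * (u - a) / δ) = δ := by
  rcases eq_or_ne δ 0 with rfl | hδ
  · simp
  have hlin : ∀ u, π * (u - a) / δ = π / δ * u - π / δ * a := fun u => by ring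
  simp_rw [hlin]
  rw [intervalIntegral.integral_comp_mul_sub (f := dirichletKernel M) (div_ne_zero pi_ne_zero hδ),
    sub_self, show π / δ * (a + δ) - π / δ * a = π by field_simp; ring, integral_dirichletKernel,
    smul_eq_mul]
  field_simp

theorem sum_exp_mul_integral_eq_integral_dirichletKernel {f : ℝ → ℂ} {a b : ℝ}
    (hf : IntervalIntegrable f volume a b) (δ : ℝ) (M : ℕ) :
    ∑ n ∈ Icc (-(M : ℤ)) M, Complex.exp (I * π * n * a / δ) *
        ∫ u in a..b, f u * Complex.exp (-(I * π * n * u) / δ)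
      = ∫ u in a..b, f u * dirichletKernel M (π * (u - a) / δ) := by
  have hexp : ∀ (n : ℤ) (u : ℝ),
      Complex.exp (I * π * n * a / δ) * (f u * Complex.exp (-(I * π * n * u) / δ))
        = f u * Complex.exp (n * ↑(-(π * (u - a) / δ)) * I) := fun n u => by
    rw [mul_left_comm, ← Complex.exp_add]
    congr 2
    push_cast
    ring
  simp_rw [← intervalIntegral.integral_const_mul, hexp]
  rw [← intervalIntegral.integral_finsetSum fun n _ => hf.mul_continuousOn (by fun_prop)]
  congr with u
  rw [← dirichletKernel_neg, ofReal_dirichletKernel, mul_sum]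

theorem continuousOn_dslope_of_differentiableAt {𝕜 E : Type*} [NontriviallyNormedField 𝕜]
    [NormedAddCommGroup E] [NormedSpace 𝕜 E] {f : 𝕜 → E} {s : Set 𝕜} {a : 𝕜}
    (hf : ContinuousOn f s) (ha : DifferentiableAt 𝕜 f a) : ContinuousOn (dslope f a) s := by
  intro u hu
  rcases eq_or_ne u a with rfl | hua
  · exact (continuousAt_dslope_same.2 ha).continuousWithinAt
  · exact (continuousWithinAt_dslope_of_ne hua).2 (hf u hu)

theorem exists_continuousOn_sub_eq_smul {𝕜 E : Type*} [NontriviallyNormedField 𝕜]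
    [NormedAddCommGroup E] [NormedSpace 𝕜 E] {f : 𝕜 → E} {g : 𝕜 → 𝕜} {g' : 𝕜} {s : Set 𝕜}
    {a : 𝕜}
    (hf : ContinuousOn f s) (hfa : DifferentiableAt 𝕜 f a) (hg : ContinuousOn g s)
    (hga : HasDerivAt g g' a) (hg' : g' ≠ 0) (hgs : ∀ u ∈ s, u ≠ a → g u ≠ g a) :
    ∃ ψ : 𝕜 → E, ContinuousOn ψ s ∧ ∀ u ∈ s, f u - f a = (g u - g a) • ψ u := by
  have hne : ∀ u ∈ s, dslope g a u ≠ 0 := by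
    intro u hu
    rcases eq_or_ne u a with rfl | hua
    · rwa [dslope_same, hga.deriv]
    · rw [dslope_of_ne _ hua, slope_def_field]
      exact div_ne_zero (sub_ne_zero.2 (hgs u hu hua)) (sub_ne_zero.2 hua)
  refine ⟨fun u => (dslope g a u)⁻¹ • dslope f a u,
    ((continuousOn_dslope_of_differentiableAt hg hga.differentiableAt).inv₀ hne).smul
      (continuousOn_dslope_of_differentiableAt hf hfa), fun u hu => ?_⟩
  rw [← sub_smul_dslope f a u, ← sub_smul_dslope g a u, smul_eq_mul, smul_smul, mul_assoc,
    mul_inv_cancel₀ (hne u hu), mul_one]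

theorem exists_continuousOn_eq_add_mul_sin {f : ℝ → ℂ} {a δ : ℝ} (hδ : 0 < δ)
    (hf : ContinuousOn f (Set.Icc a (a + δ))) (hfa : DifferentiableAt ℝ f a) :
    ∃ ψ : ℝ → ℂ, ContinuousOn ψ (Set.Icc a (a + δ)) ∧
      ∀ u ∈ Set.Icc a (a + δ), f u = f a + ψ u * Real.sin (π * (u - a) / δ / 2) := by
  have hg : HasDerivAt (fun u => Real.sin (π * (u - a) / δ / 2)) (π / δ / 2) a := by
    simpa using (((hasDerivAt_id a).sub_const a).const_mul π |>.div_const δ |>.div_const 2).sin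
  have hgs : ∀ u ∈ Set.Icc a (a + δ), u ≠ a →
      Real.sin (π * (u - a) / δ / 2) ≠ Real.sin (π * (a - a) / δ / 2) := by
    rintro u ⟨hau, huδ⟩ hua
    have hpos : 0 < u - a := sub_pos.2 (lt_of_le_of_ne hau (Ne.symm hua))
    rw [sub_self, mul_zero, zero_div, zero_div, sin_zero]
    refine (sin_pos_of_pos_of_lt_pi (by positivity) ?_).ne'
    rw [div_div, div_lt_iff₀ (by positivity)]
    nlinarith [pi_pos]
  obtain ⟨ψ, hψ, hfψ⟩ := exists_continuousOn_sub_eq_smul hf hfa (by fun_prop) hg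
    (by positivity) hgs
  refine ⟨ψ, hψ, fun u hu => ?_⟩
  rw [← sub_eq_iff_eq_add', hfψ u hu, sub_self, mul_zero, zero_div, zero_div, sin_zero, sub_zero,
    Complex.real_smul, mul_comm]

theorem tendsto_intervalIntegral_mul_exp_cocompact (φ : ℝ → ℂ) (a b : ℝ) :
    Tendsto (fun w : ℝ => ∫ u in a..b, φ u * Complex.exp (w * u * I)) (cocompact ℝ) (𝓝 0) := by
  have hscale : Tendsto (fun w : ℝ => -(2 * π)⁻¹ * w) (cocompact ℝ) (cocompact ℝ) :=
    (Homeomorph.mulLeft₀ _ (by simp [pi_ne_zero])).isClosedEmbedding.tendsto_cocompact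
  rw [tendsto_zero_iff_norm_tendsto_zero]
  have hRL :=
    ((Real.tendsto_integral_exp_smul_cocompact ((Ι a b).indicator φ)).comp hscale).norm
  rw [norm_zero] at hRL
  refine hRL.congr fun w => ?_
  rw [norm_integral_eq_norm_integral_uIoc, ← MeasureTheory.integral_indicator measurableSet_uIoc]
  simp only [Function.comp_apply]
  congr 2 with v
  by_cases hv : v ∈ Ι a b
  · simp only [Set.indicator_of_mem hv, Circle.smul_def,
      Real.fourierChar_apply, smul_eq_mul, mul_comm (φ v)]
    congr 3
    push_cast
    field_simp
  · simp [Set.indicator_of_notMem hv]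

theorem tendsto_intervalIntegral_mul_sin_cocompact {φ : ℝ → ℂ} {a b : ℝ}
    (hφ : IntervalIntegrable φ volume a b) (x₀ : ℝ) :
    Tendsto (fun w : ℝ => ∫ u in a..b, φ u * Real.sin (w * (u - x₀))) (cocompact ℝ) (𝓝 0) := by
  set φ₀ : ℝ → ℂ := fun v => φ (v + x₀)
  have hφ₀ : IntervalIntegrable φ₀ volume (a - x₀) (b - x₀) := hφ.comp_add_right x₀
  have hsplit : ∀ w : ℝ, ∫ u in a..b, φ u * Real.sin (w * (u - x₀))
      = I / 2 * ((∫ v in (a - x₀)..(b - x₀), φ₀ v * Complex.exp (↑(-w) * v * I))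
        - ∫ v in (a - x₀)..(b - x₀), φ₀ v * Complex.exp (w * v * I)) := fun w => by
    rw [← intervalIntegral.integral_sub (hφ₀.mul_continuousOn (by fun_prop))
      (hφ₀.mul_continuousOn (by fun_prop)), ← intervalIntegral.integral_const_mul,
      ← intervalIntegral.integral_comp_sub_right _ x₀]
    congr with u
    simp only [φ₀, sub_add_cancel, Complex.ofReal_sin, Complex.sin]
    push_cast
    ring_nf
  have hneg : Tendsto (fun w : ℝ => -w) (cocompact ℝ) (cocompact ℝ) :=
    (Homeomorph.neg ℝ).isClosedEmbedding.tendsto_cocompact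
  have hRL := tendsto_intervalIntegral_mul_exp_cocompact φ₀ (a - x₀) (b - x₀)
  have hlim := ((hRL.comp hneg).sub hRL).const_mul (I / 2)
  rw [sub_self, mul_zero] at hlim
  exact hlim.congr fun w => (hsplit w).symm

theorem integral_mul_dirichletKernel_eq {f ψ : ℝ → ℂ} {a δ : ℝ}
    (hψ : IntervalIntegrable ψ volume a (a + δ))
    (hfψ : ∀ u ∈ Set.uIcc a (a + δ), f u = f a + ψ u * Real.sin (π * (u - a) / δ / 2))
    (M : ℕ) :
    ∫ u in a..(a + δ), f u * dirichletKernel M (π * (u - a) / δ)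
      = δ * f a + ∫ u in a..(a + δ), ψ u * Real.sin ((M + 1 / 2) * π / δ * (u - a)) := by
  have hpt : Set.EqOn (fun u => f u * dirichletKernel M (π * (u - a) / δ))
      (fun u => f a * dirichletKernel M (π * (u - a) / δ)
        + ψ u * Real.sin ((M + 1 / 2) * π / δ * (u - a))) (Set.uIcc a (a + δ)) := by
    intro u hu
    dsimp only
    rw [hfψ u hu, show (M + 1 / 2) * π / δ * (u - a) = (M + 1 / 2) * (π * (u - a) / δ) by ring,
      ← dirichletKernel_mul_sin]
    push_cast
    ring
  rw [intervalIntegral.integral_congr hpt, intervalIntegral.integral_add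
      (((by fun_prop : Continuous _).intervalIntegrable _ _).const_mul _)
      (hψ.mul_continuousOn (by fun_prop)),
    intervalIntegral.integral_const_mul, intervalIntegral.integral_ofReal,
    integral_dirichletKernel_comp, mul_comm]

theorem fourier_corollary_right_general (a δ : ℝ) (hδ : 0 < δ)
    (f f' : ℝ → ℂ)
    (hdiff : ∀ x ∈ Set.Icc a (a + δ), HasDerivAt f (f' x) x) :
    Filter.Tendsto (fun M : ℕ => ((1 / (2 * δ) : ℝ) : ℂ) *
        ∑ n ∈ Finset.Icc (-(M : ℤ)) (M : ℤ),
          Complex.exp (Complex.I * Real.pi * n * a / δ) *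
            ∫ u in a..(a + δ), f u * Complex.exp (-(Complex.I * Real.pi * n * u) / δ))
      Filter.atTop (nhds (f a / 2)) := by
  have hf : ContinuousOn f (Set.Icc a (a + δ)) := fun x hx =>
    (hdiff x hx).continuousAt.continuousWithinAt
  obtain ⟨ψ, hψ, hfψ⟩ := exists_continuousOn_eq_add_mul_sin hδ hf
    (hdiff a (Set.left_mem_Icc.2 (by linarith))).differentiableAt
  rw [← Set.uIcc_of_le (by linarith : a ≤ a + δ)] at hf hψ hfψ
  have hfreq : Tendsto (fun M : ℕ => (M + 1 / 2) * π / δ) atTop atTop :=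
    ((tendsto_natCast_atTop_atTop.atTop_add tendsto_const_nhds).atTop_mul_const
      pi_pos).atTop_div_const hδ
  have hRL := (tendsto_intervalIntegral_mul_sin_cocompact hψ.intervalIntegrable a).comp
    (hfreq.mono_right atTop_le_cocompact)
  convert (hRL.const_mul ((1 / (2 * δ) : ℝ) : ℂ)).const_add (f a / 2) using 2 with M
  · rw [Function.comp_apply,
      sum_exp_mul_integral_eq_integral_dirichletKernel hf.intervalIntegrable,
      integral_mul_dirichletKernel_eq hψ.intervalIntegrable hfψ, mul_add]
    congr 1
    push_cast
    field_simp [Complex.ofReal_ne_zero.2 hδ.ne']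
  · simp

/-- Corollary II of the paper (right-hand local Fourier series): for `f` differentiable
on `[a, a+δ]` with integrable derivative,
`f(a)/2 = (1/(2δ)) lim_{M→∞} ∑_{n=-M}^{M} e^{iπna/δ} ∫_{a}^{a+δ} f(u) e^{-iπnu/δ} du`. -/
theorem fourier_corollary_right (a δ : ℝ) (hδ : 0 < δ)
    (f f' : ℝ → ℂ)
    (hdiff : ∀ x ∈ Set.Icc a (a + δ), HasDerivAt f (f' x) x)
    (hint : IntervalIntegrable f' volume a (a + δ)) :
    Filter.Tendsto (fun M : ℕ => ((1 / (2 * δ) : ℝ) : ℂ) *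
        ∑ n ∈ Finset.Icc (-(M : ℤ)) (M : ℤ),
          Complex.exp (Complex.I * Real.pi * n * a / δ) *
            ∫ u in a..(a + δ), f u * Complex.exp (-(Complex.I * Real.pi * n * u) / δ))
      Filter.atTop (nhds (f a / 2)) :=
  fourier_corollary_right_general a δ hδ f f' hdiff
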